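/- arXiv:math/0401411 — 3 statements merged into one kernel-verified Lean document; each statement's English description precedes it below -/
import Mathlib

section
/- If (T_n) is a sequence of self-adjoint operators whose Riesz transforms converge in operator norm, F(T_n) → F(T), then the resolvents converge in operator norm: (T_n + i)^{-1} → (T + i)^{-1}. In other words, the Riesz metric is stronger than the graph (gap) metric on self-adjoint operators. -/
open Complex Set MeasureTheory Filter Topology

noncomputable section

/-- A (possibly unbounded) self-adjoint operator on `H`, encoded together with its
Borel functional calculus: `op` is the operator itself (a densely defined symmetric
partial linear map), `phi` is the Borel functional calculus `f ↦ f(op)`, a star algebra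
homomorphism from bounded Borel functions (encoded as arbitrary functions `ℝ → ℂ`;
`phi` is only used on bounded functions) into bounded operators, contractive with
respect to the sup norm, and compatible with `op` in the sense that
`phi (fun t => (t+i)⁻¹)` is the resolvent `(op + i)⁻¹`. -/
structure SAOp (H : Type*) [NormedAddCommGroup H] [InnerProductSpace ℂ H]
    [CompleteSpace H] where
  op : H →ₗ.[ℂ] H
  dense_dom : Dense (op.domain : Set H)
  symm : ∀ x y : op.domain, (inner ℂ (op x) (y : H) : ℂ) = inner ℂ (x : H) (op y)
  phi : (ℝ → ℂ) →⋆ₐ[ℂ] (H →L[ℂ] H)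
  norm_le : ∀ (f : ℝ → ℂ) (C : ℝ), 0 ≤ C → (∀ x, ‖f x‖ ≤ C) → ‖phi f‖ ≤ C
  res_mem : ∀ x : H, phi (fun t => ((t : ℂ) + Complex.I)⁻¹) x ∈ op.domain
  op_res_add : ∀ x : H,
    op ⟨phi (fun t => ((t : ℂ) + Complex.I)⁻¹) x, res_mem x⟩
      + Complex.I • phi (fun t => ((t : ℂ) + Complex.I)⁻¹) x = x
  res_op : ∀ y : op.domain,
    phi (fun t => ((t : ℂ) + Complex.I)⁻¹) (op y + Complex.I • (y : H)) = (y : H)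

namespace SAOp

variable {H : Type*} [NormedAddCommGroup H] [InnerProductSpace ℂ H] [CompleteSpace H]

/-- The resolvent `(T + i)⁻¹`. -/
def res (T : SAOp H) : H →L[ℂ] H := T.phi (fun t => ((t : ℂ) + Complex.I)⁻¹)

/-- The Riesz transform `F(T) = T (I + T²)^{-1/2}`. -/
def rieszF (T : SAOp H) : H →L[ℂ] H :=
  T.phi (fun t => (t : ℂ) / ((Real.sqrt (1 + t ^ 2) : ℝ) : ℂ))

/-- `(I + T²)⁻¹`. -/
def invOnePlusSq (T : SAOp H) : H →L[ℂ] H :=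
  T.phi (fun t => (((1 + t ^ 2 : ℝ)) : ℂ)⁻¹)

/-- `(I + T²)^{-1/2} = |T + i|⁻¹`. -/
def invSqrt (T : SAOp H) : H →L[ℂ] H :=
  T.phi (fun t => ((Real.sqrt (1 + t ^ 2) : ℝ) : ℂ)⁻¹)

/-- The spectral projection `1_{(l,∞)}(T)`. -/
def specProjGt (T : SAOp H) (l : ℝ) : H →L[ℂ] H :=
  T.phi (Set.indicator (Set.Ioi l) 1)

/-- The spectral projection `1_{[l,∞)}(T)`. -/
def specProjGe (T : SAOp H) (l : ℝ) : H →L[ℂ] H :=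
  T.phi (Set.indicator (Set.Ici l) 1)

/-- The spectrum of `T` does not meet `s`. -/
def Avoids (T : SAOp H) (s : Set ℝ) : Prop := T.phi (Set.indicator s 1) = 0

/-- `T` is a self-adjoint Fredholm operator: `0` is not in the essential spectrum,
i.e. some spectral projection `1_{(-ε,ε)}(T)` has finite rank. -/
def IsFredholm (T : SAOp H) : Prop :=
  ∃ ε > (0 : ℝ), FiniteDimensional ℂ
    (LinearMap.range ((T.phi (Set.indicator (Set.Ioo (-ε) ε) 1) : H →L[ℂ] H) : H →ₗ[ℂ] H))

end SAOp

/-- `P` is an orthogonal projection. -/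
def IsOrthoProj {H : Type*} [NormedAddCommGroup H] [InnerProductSpace ℂ H]
    [CompleteSpace H] (P : H →L[ℂ] H) : Prop :=
  IsSelfAdjoint P ∧ IsIdempotentElem P

/-- A linear map is Fredholm if its kernel and cokernel are finite dimensional. -/
def IsFredholmLM {M N : Type*} [AddCommGroup M] [Module ℂ M] [AddCommGroup N]
    [Module ℂ N] (f : M →ₗ[ℂ] N) : Prop :=
  FiniteDimensional ℂ (LinearMap.ker f) ∧ FiniteDimensional ℂ (N ⧸ LinearMap.range f)

/-- The Fredholm index of a linear map: `dim ker − dim coker`. -/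
noncomputable def indexLM {M N : Type*} [AddCommGroup M] [Module ℂ M] [AddCommGroup N]
    [Module ℂ N] (f : M →ₗ[ℂ] N) : ℤ :=
  (Module.finrank ℂ (LinearMap.ker f) : ℤ) -
    (Module.finrank ℂ (N ⧸ LinearMap.range f) : ℤ)

/-- For projections `P Q`, the operator `Q : ran P → ran Q`. -/
noncomputable def pairRestrict {H : Type*} [NormedAddCommGroup H]
    [InnerProductSpace ℂ H] (P Q : H →L[ℂ] H) :
    (LinearMap.range (P : H →ₗ[ℂ] H)) →ₗ[ℂ] (LinearMap.range (Q : H →ₗ[ℂ] H)) :=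
  (Q : H →ₗ[ℂ] H).restrict (fun x _ => LinearMap.mem_range_self _ x)

/-- `(P,Q)` is a Fredholm pair of projections. -/
def IsFredholmPair {H : Type*} [NormedAddCommGroup H] [InnerProductSpace ℂ H]
    (P Q : H →L[ℂ] H) : Prop := IsFredholmLM (pairRestrict P Q)

/-- The index `ind(P,Q)` of a pair of projections. -/
noncomputable def pairIndex {H : Type*} [NormedAddCommGroup H]
    [InnerProductSpace ℂ H] (P Q : H →L[ℂ] H) : ℤ := indexLM (pairRestrict P Q)

/-!
The resolvent is a continuous function of the Riesz transform: `s = t / √(1 + t²)` ranges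
over `[-1, 1]` and `(t + i)⁻¹` is a continuous function of `s` there. Approximate that function
uniformly on `[-1, 1]` by a polynomial `P`. Since the functional calculus is contractive,
`‖(T + i)⁻¹ - P(F(T))‖` is small uniformly in `T`, while `P(F(Tₙ)) → P(F(T))` because
polynomials are norm continuous; an `ε/3` argument concludes.
-/

open Polynomial

/-- With `s = t / √(1 + t²)` one has `1 - s² = (1 + t²)⁻¹`, so `(t + i)⁻¹ = (t - i) / (1 + t²)`
is the value at `s` of this function, continuous on `[-1, 1]`. -/
def resolventProfile (s : ℝ) : ℂ :=
  ((s * √(1 - s ^ 2) : ℝ) : ℂ) - I * ((1 - s ^ 2 : ℝ) : ℂ)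

lemma continuous_resolventProfile : Continuous resolventProfile := by
  unfold resolventProfile
  fun_prop

lemma one_sub_sq_div_sqrt_one_add_sq (t : ℝ) : 1 - (t / √(1 + t ^ 2)) ^ 2 = (1 + t ^ 2)⁻¹ := by
  have h : (0 : ℝ) < 1 + t ^ 2 := by positivity
  rw [div_pow, Real.sq_sqrt h.le]
  field_simp
  ring

lemma div_sqrt_one_add_sq_mem_Icc (t : ℝ) : t / √(1 + t ^ 2) ∈ Icc (-1 : ℝ) 1 := by
  have h : 0 ≤ 1 - (t / √(1 + t ^ 2)) ^ 2 := by
    rw [one_sub_sq_div_sqrt_one_add_sq]; positivity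
  exact abs_le.mp (abs_le_one_iff_mul_self_le_one.mpr (by nlinarith))

lemma inv_ofReal_add_I_eq_resolventProfile (t : ℝ) :
    ((t : ℂ) + I)⁻¹ = resolventProfile (t / √(1 + t ^ 2)) := by
  have h : (0 : ℝ) < 1 + t ^ 2 := by positivity
  have hts : t / √(1 + t ^ 2) * (√(1 + t ^ 2))⁻¹ = t / (1 + t ^ 2) := by
    rw [div_mul_eq_mul_div, ← div_eq_mul_inv, div_div, Real.mul_self_sqrt h.le]
  have hc : (1 + (t : ℂ) ^ 2) ≠ 0 := by exact_mod_cast h.ne'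
  rw [resolventProfile, one_sub_sq_div_sqrt_one_add_sq, Real.sqrt_inv, hts,
    inv_eq_of_mul_eq_one_right]
  push_cast
  field_simp
  linear_combination -I_sq

lemma Polynomial.exists_complex_near_of_continuousOn (a b : ℝ) (g : ℝ → ℂ)
    (hg : ContinuousOn g (Icc a b)) {ε : ℝ} (hε : 0 < ε) :
    ∃ P : ℂ[X], ∀ s ∈ Icc a b, ‖P.eval (s : ℂ) - g s‖ < ε := by
  obtain ⟨p, hp⟩ := exists_polynomial_near_of_continuousOn a b (fun s => (g s).re)
    (Complex.continuous_re.comp_continuousOn hg) (ε / 2) (half_pos hε)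
  obtain ⟨q, hq⟩ := exists_polynomial_near_of_continuousOn a b (fun s => (g s).im)
    (Complex.continuous_im.comp_continuousOn hg) (ε / 2) (half_pos hε)
  refine ⟨p.map ofRealHom + C I * q.map ofRealHom, fun s hs => ?_⟩
  have hsplit : (p.map ofRealHom + C I * q.map ofRealHom).eval (s : ℂ) - g s
      = ((p.eval s - (g s).re : ℝ) : ℂ) + I * ((q.eval s - (g s).im : ℝ) : ℂ) := by
    have hev (r : ℝ[X]) : (r.map ofRealHom).eval (s : ℂ) = ((r.eval s : ℝ) : ℂ) :=
      (eval_map _ _).trans (eval₂_at_apply ofRealHom s)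
    rw [eval_add, eval_mul, eval_C, hev, hev]
    nth_rw 1 [← re_add_im (g s)]
    push_cast
    ring
  calc ‖(p.map ofRealHom + C I * q.map ofRealHom).eval (s : ℂ) - g s‖
      ≤ |p.eval s - (g s).re| + |q.eval s - (g s).im| := by
        rw [hsplit]
        refine (norm_add_le _ _).trans_eq ?_
        rw [norm_mul, Complex.norm_I, one_mul, Complex.norm_real, Complex.norm_real,
          Real.norm_eq_abs, Real.norm_eq_abs]
    _ < ε / 2 + ε / 2 := add_lt_add (hp s hs) (hq s hs)
    _ = ε := add_halves ε

lemma tendsto_of_forall_approx {ι E : Type*} [SeminormedAddCommGroup E] {l : Filter ι}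
    {u : ι → E} {x : E}
    (h : ∀ ε > 0, ∃ v : ι → E, ∃ y, Tendsto v l (𝓝 y) ∧ (∀ i, ‖u i - v i‖ ≤ ε) ∧ ‖y - x‖ ≤ ε) :
    Tendsto u l (𝓝 x) := by
  rw [Metric.tendsto_nhds]
  intro ε hε
  obtain ⟨v, y, hv, huv, hyx⟩ := h (ε / 3) (by positivity)
  filter_upwards [Metric.tendsto_nhds.mp hv (ε / 3) (by positivity)] with i hi
  rw [dist_eq_norm] at hi ⊢
  calc ‖u i - x‖ = ‖(u i - v i) + (v i - y) + (y - x)‖ := by abel_nf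
    _ ≤ ‖u i - v i‖ + ‖v i - y‖ + ‖y - x‖ := norm_add₃_le
    _ < ε := by linarith [huv i]

namespace SAOp

variable {H : Type*} [NormedAddCommGroup H] [InnerProductSpace ℂ H] [CompleteSpace H]

lemma norm_phi_sub_le (T : SAOp H) {f g : ℝ → ℂ} {C : ℝ} (h : ∀ t, ‖f t - g t‖ ≤ C) :
    ‖T.phi f - T.phi g‖ ≤ C := by
  rw [← map_sub]
  exact T.norm_le _ C ((norm_nonneg _).trans (h 0)) h

lemma aeval_phi (T : SAOp H) (f : ℝ → ℂ) (P : ℂ[X]) :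
    aeval (T.phi f) P = T.phi (fun t => P.eval (f t)) := by
  rw [aeval_algHom_apply]
  congr 1
  funext t
  simp [aeval_def]

lemma tendsto_phi_comp {ι : Type*} {l : Filter ι} (T : ι → SAOp H) (T' : SAOp H)
    {f : ℝ → ℝ} {a b : ℝ} (hf : ∀ t, f t ∈ Icc a b) {g : ℝ → ℂ} (hg : ContinuousOn g (Icc a b))
    (h : Tendsto (fun i => (T i).phi (fun t => (f t : ℂ))) l (𝓝 (T'.phi fun t => (f t : ℂ)))) :
    Tendsto (fun i => (T i).phi (g ∘ f)) l (𝓝 (T'.phi (g ∘ f))) := by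
  refine tendsto_of_forall_approx fun ε hε => ?_
  obtain ⟨P, hP⟩ := Polynomial.exists_complex_near_of_continuousOn a b g hg hε
  have hPf (S : SAOp H) : ‖S.phi (g ∘ f) - aeval (S.phi fun t => (f t : ℂ)) P‖ ≤ ε := by
    rw [aeval_phi]
    exact S.norm_phi_sub_le fun t => by
      rw [norm_sub_rev]; exact (hP _ (hf t)).le
  refine ⟨fun i => aeval ((T i).phi fun t => (f t : ℂ)) P, aeval (T'.phi fun t => (f t : ℂ)) P,
    (P.continuous_aeval.tendsto _).comp h, fun i => hPf (T i), ?_⟩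
  rw [norm_sub_rev]
  exact hPf T'

lemma rieszF_eq_phi_ofReal (T : SAOp H) : T.rieszF = T.phi fun t => ((t / √(1 + t ^ 2) : ℝ) : ℂ) := by
  simp only [rieszF, ofReal_div]

lemma res_eq_phi_comp (T : SAOp H) : T.res = T.phi (resolventProfile ∘ fun t => t / √(1 + t ^ 2)) := by
  simp only [res, Function.comp_def, inv_ofReal_add_I_eq_resolventProfile]

end SAOp

/-- If the Riesz transforms of a sequence of self-adjoint operators
converge in norm, then the resolvents converge in norm: the Riesz metric is stronger
than the graph metric. -/
theorem statement1 {H : Type*} [NormedAddCommGroup H] [InnerProductSpace ℂ H]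
    [CompleteSpace H] (T : ℕ → SAOp H) (T' : SAOp H)
    (h : Tendsto (fun n => (T n).rieszF) atTop (𝓝 T'.rieszF)) :
    Tendsto (fun n => (T n).res) atTop (𝓝 T'.res) := by
  simp only [SAOp.rieszF_eq_phi_ofReal] at h
  simp only [SAOp.res_eq_phi_comp]
  exact SAOp.tendsto_phi_comp T T' div_sqrt_one_add_sq_mem_Icc
    continuous_resolventProfile.continuousOn h
end
end

section
/- The bounded self-adjoint operators B^sa form an open subset of the space of self-adjoint operators C^sa with the graph metric d_G: if T ∈ B^sa with ‖T‖ ≤ R and T̃ ∈ C^sa satisfies d_G(T,T̃) < (1/2)(1+R)^{-1}, then T̃ is bounded. Moreover on B^sa the graph metric induces the norm topology; quantitatively, ‖T−T̃‖ ≤ 2(1+R)² d_G(T,T̃) and d_G(T,T̃) ≤ 2‖T−T̃‖ when ‖T−T̃‖ < 1/2. -/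
open Complex Set MeasureTheory Filter Topology

noncomputable section

/-
The resolvent of a bounded self-adjoint `T` is the inverse of the bounded operator `a = T + i`,
and `‖a‖ ≤ 1 + ‖T‖`. If `r` is close to `a⁻¹`, then `K = a (a⁻¹ - r)` is small and
`r = a⁻¹ (1 - K)` is invertible by a Neumann series, so `r` is the resolvent of the bounded
operator `(1 - K)⁻¹ a - i`; moreover `a - (1 - K)⁻¹ a = -K (1 - K)⁻¹ a` has norm at most
`2 ‖a‖² ‖a⁻¹ - r‖`. Conversely `a⁻¹ - b⁻¹ = a⁻¹ (b - a) b⁻¹`, and resolvents are contractions.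
-/

section NormedRing

variable {R : Type*} [NormedRing R]

theorem Units.norm_inv_sub_inv_le (a b : Rˣ) :
    ‖(↑a⁻¹ : R) - ↑b⁻¹‖ ≤ ‖(↑a⁻¹ : R)‖ * ‖(b : R) - a‖ * ‖(↑b⁻¹ : R)‖ := by
  have h : (↑a⁻¹ : R) - ↑b⁻¹ = ↑a⁻¹ * (b - a) * ↑b⁻¹ := by
    simp only [mul_sub, sub_mul, Units.inv_mul, one_mul, mul_assoc, Units.mul_inv, mul_one]
  rw [h]
  exact (norm_mul_le _ _).trans (by gcongr; exact norm_mul_le _ _)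

variable [HasSummableGeomSeries R]

theorem Units.norm_inv_oneSub_le_two (h1 : ‖(1 : R)‖ ≤ 1) {t : R} (ht : ‖t‖ ≤ 1 / 2) :
    ‖(↑(Units.oneSub t (by linarith))⁻¹ : R)‖ ≤ 2 := by
  have hgeom := tsum_geometric_le_of_norm_lt_one t (by linarith)
  have hinv : (1 - ‖t‖)⁻¹ ≤ 2 := by
    rw [inv_le_comm₀ (by linarith) two_pos]
    linarith
  change ‖∑' n : ℕ, t ^ n‖ ≤ 2
  linarith

theorem Units.exists_inv_eq_of_norm_mul_norm_inv_sub_le (h1 : ‖(1 : R)‖ ≤ 1) (a : Rˣ) (r : R)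
    (hr : ‖(a : R)‖ * ‖(↑a⁻¹ : R) - r‖ ≤ 1 / 2) :
    ∃ b : Rˣ, (↑b⁻¹ : R) = r ∧ ‖(a : R) - b‖ ≤ 2 * ‖(a : R)‖ ^ 2 * ‖(↑a⁻¹ : R) - r‖ := by
  set K : R := a * (↑a⁻¹ - r)
  have hK : ‖K‖ ≤ 1 / 2 := (norm_mul_le _ _).trans hr
  set u := Units.oneSub K (by linarith)
  have hu : (u : R) = a * r := by
    simp only [u, K, Units.val_oneSub, mul_sub, Units.mul_inv, sub_sub_cancel]
  refine ⟨(a⁻¹ * u)⁻¹, by simp [hu], ?_⟩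
  have hdiff : (a : R) - ↑(a⁻¹ * u)⁻¹ = -(K * ↑u⁻¹) * a := by
    have hKu : K * ↑u⁻¹ = ↑u⁻¹ - 1 := by
      rw [eq_sub_iff_add_eq, ← Units.mul_inv u, Units.val_oneSub, sub_mul, one_mul,
        add_sub_cancel]
    simp only [mul_inv_rev, inv_inv, Units.val_mul, hKu, neg_sub, sub_mul, one_mul]
  calc ‖(a : R) - ↑(a⁻¹ * u)⁻¹‖ = ‖-(K * ↑u⁻¹) * a‖ := by rw [hdiff]
    _ ≤ ‖K‖ * ‖(↑u⁻¹ : R)‖ * ‖(a : R)‖ := by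
      refine (norm_mul_le _ _).trans ?_
      rw [norm_neg]
      gcongr
      exact norm_mul_le _ _
    _ ≤ ‖(a : R)‖ * ‖(↑a⁻¹ : R) - r‖ * 2 * ‖(a : R)‖ := by
      gcongr
      · exact norm_mul_le _ _
      · exact Units.norm_inv_oneSub_le_two h1 hK
    _ = 2 * ‖(a : R)‖ ^ 2 * ‖(↑a⁻¹ : R) - r‖ := by ring

end NormedRing

namespace SAOp

variable {H : Type*} [NormedAddCommGroup H] [InnerProductSpace ℂ H] [CompleteSpace H]

theorem norm_res_le_one (T : SAOp H) : ‖T.res‖ ≤ 1 := by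
  refine T.norm_le _ 1 zero_le_one fun t => ?_
  have hsq : ‖(t : ℂ) + Complex.I‖ ^ 2 = t ^ 2 + 1 := by
    rw [Complex.sq_norm]
    simp [Complex.normSq_apply, sq]
  rw [norm_inv]
  exact inv_le_one_of_one_le₀ (by nlinarith [norm_nonneg ((t : ℂ) + Complex.I)])

def shiftUnit (T : SAOp H) (Tb : H →L[ℂ] H) (hTdom : T.op.domain = ⊤)
    (hTb : ∀ (x : H) (hx : x ∈ T.op.domain), T.op ⟨x, hx⟩ = Tb x) : (H →L[ℂ] H)ˣ where
  val := Tb + Complex.I • 1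
  inv := T.res
  val_inv := by
    ext x
    simpa [res, hTb] using T.op_res_add x
  inv_val := by
    ext x
    simpa [res, hTb] using T.res_op ⟨x, hTdom ▸ Submodule.mem_top⟩

theorem domain_eq_top_of_res_mul_eq_one (T : SAOp H) {S : H →L[ℂ] H} (hS : T.res * S = 1) :
    T.op.domain = ⊤ := by
  refine eq_top_iff.2 fun x _ => ?_
  have hresS : T.res (S x) = x := DFunLike.congr_fun hS x
  have h := T.res_mem (S x)
  rwa [← res, hresS] at h

theorem op_eq_of_res_mul_eq_one (T : SAOp H) {S : H →L[ℂ] H} (hS : T.res * S = 1) (x : H)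
    (hx : x ∈ T.op.domain) : T.op ⟨x, hx⟩ = (S - Complex.I • 1) x := by
  have hresS : T.res (S x) = x := DFunLike.congr_fun hS x
  have hsub : (⟨T.res (S x), T.res_mem (S x)⟩ : T.op.domain) = ⟨x, hx⟩ := Subtype.ext hresS
  have h : T.op ⟨T.res (S x), T.res_mem (S x)⟩ + Complex.I • T.res (S x) = S x :=
    T.op_res_add (S x)
  rw [hsub, hresS] at h
  simp [← h]

end SAOp

/-- the bounded self-adjoint operators are open in `(𝒞^sa, d_G)` and
on them the graph metric induces the norm topology. Quantitatively: if `T` is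
bounded self-adjoint with `‖T‖ ≤ R` and `d_G(T,T̃) < (1/2)(1+R)⁻¹` then `T̃` is
bounded with `‖T - T̃‖ ≤ 2(1+R)² d_G(T,T̃)`; conversely if `T̃` is bounded with
`‖T - T̃‖ < 1/2` then `d_G(T,T̃) ≤ 2‖T - T̃‖`. -/
theorem statement15 {H : Type*} [NormedAddCommGroup H] [InnerProductSpace ℂ H]
    [CompleteSpace H] (T T' : SAOp H) (Tb : H →L[ℂ] H) (R : ℝ)
    (hTdom : T.op.domain = ⊤)
    (hTb : ∀ (x : H) (hx : x ∈ T.op.domain), T.op ⟨x, hx⟩ = Tb x)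
    (hR : ‖Tb‖ ≤ R) :
    (‖T.res - T'.res‖ < 1 / 2 * (1 + R)⁻¹ →
      ∃ B : H →L[ℂ] H, T'.op.domain = ⊤ ∧
        (∀ (x : H) (hx : x ∈ T'.op.domain), T'.op ⟨x, hx⟩ = B x) ∧
        ‖Tb - B‖ ≤ 2 * (1 + R) ^ 2 * ‖T.res - T'.res‖) ∧
    (∀ B : H →L[ℂ] H, T'.op.domain = ⊤ →
      (∀ (x : H) (hx : x ∈ T'.op.domain), T'.op ⟨x, hx⟩ = B x) →
      ‖Tb - B‖ < 1 / 2 → ‖T.res - T'.res‖ ≤ 2 * ‖Tb - B‖) := by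
  set a := T.shiftUnit Tb hTdom hTb
  have ha : ‖(a : H →L[ℂ] H)‖ ≤ 1 + R := by
    have hI : ‖Complex.I • (1 : H →L[ℂ] H)‖ ≤ 1 := by
      rw [norm_smul, Complex.norm_I, one_mul]
      exact ContinuousLinearMap.norm_id_le
    exact (norm_add_le _ _).trans (by linarith)
  have hR0 : 0 < 1 + R := by linarith [(norm_nonneg Tb).trans hR]
  refine ⟨fun hd => ?_, fun B hdom' hB _ => ?_⟩
  · have hsmall : ‖(a : H →L[ℂ] H)‖ * ‖(↑a⁻¹ : H →L[ℂ] H) - T'.res‖ ≤ 1 / 2 := by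
      calc _ ≤ (1 + R) * ‖T.res - T'.res‖ := mul_le_mul_of_nonneg_right ha (norm_nonneg _)
        _ ≤ (1 + R) * (1 / 2 * (1 + R)⁻¹) := by gcongr
        _ = 1 / 2 := by field_simp
    obtain ⟨b, hb, hab⟩ := Units.exists_inv_eq_of_norm_mul_norm_inv_sub_le
      ContinuousLinearMap.norm_id_le a T'.res hsmall
    have hres : T'.res * b = 1 := by rw [← hb, Units.inv_mul]
    refine ⟨b - Complex.I • 1, T'.domain_eq_top_of_res_mul_eq_one hres,
      T'.op_eq_of_res_mul_eq_one hres, ?_⟩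
    calc ‖Tb - (b - Complex.I • 1)‖ = ‖(a : H →L[ℂ] H) - b‖ := by
          congr 1; simp only [a, SAOp.shiftUnit]; abel
      _ ≤ 2 * ‖(a : H →L[ℂ] H)‖ ^ 2 * ‖T.res - T'.res‖ := hab
      _ ≤ 2 * (1 + R) ^ 2 * ‖T.res - T'.res‖ := by gcongr
  · set b := T'.shiftUnit B hdom' hB
    calc ‖T.res - T'.res‖ = ‖(↑a⁻¹ : H →L[ℂ] H) - ↑b⁻¹‖ := rfl
      _ ≤ 1 * ‖(b : H →L[ℂ] H) - a‖ * 1 := by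
        refine (Units.norm_inv_sub_inv_le a b).trans ?_
        gcongr
        exacts [T.norm_res_le_one, T'.norm_res_le_one]
      _ = ‖Tb - B‖ := by
        rw [mul_one, one_mul, ← norm_neg]
        congr 1; simp only [a, b, SAOp.shiftUnit]; abel
      _ ≤ 2 * ‖Tb - B‖ := by linarith [norm_nonneg (Tb - B)]
end
end

section
/- B^sa is dense in (C^sa, d_R): for any self-adjoint operator T with spectral resolution (E_λ), the bounded truncations f_n(T) = ∫_{[−n,n]} λ dE_λ + ∫_{|λ|>n} n·sgn(λ) dE_λ satisfy ‖F(T) − F(f_n(T))‖ ≤ |n/√(1+n²) − 1| → 0 as n → ∞. -/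
open Complex Set MeasureTheory Filter Topology

noncomputable section

/-!
The truncation `f_n` moves every point `x` with `|x| > n` to `±n`, and the scalar Riesz function
`g(y) = y / √(1 + y²)` is odd, increasing and bounded by `1`. Hence `g x` and `g (f_n x)` both lie
in `[g n, 1]` (or in `[-1, -g n]`), so `|g x - g (f_n x)| ≤ 1 - g n` everywhere. Since the
functional calculus is contractive for the sup norm, the same bound holds for
`‖F(T) - F(f_n(T))‖`, and `1 - g n → 0` because `g y = √(1 - (1 + y²)⁻¹)` for `y ≥ 0`.
-/

def rieszFun (y : ℝ) : ℝ := y / √(1 + y ^ 2)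

lemma rieszFun_neg (y : ℝ) : rieszFun (-y) = -rieszFun y := by
  simp only [rieszFun, neg_sq, neg_div]

lemma rieszFun_le_one (y : ℝ) : rieszFun y ≤ 1 := by
  rw [rieszFun, div_le_one (Real.sqrt_pos.2 (by positivity))]
  exact (le_abs_self y).trans (Real.abs_le_sqrt (by linarith))

lemma rieszFun_eq_sqrt {y : ℝ} (hy : 0 ≤ y) : rieszFun y = √(1 - (1 + y ^ 2)⁻¹) := by
  nth_rewrite 1 [rieszFun, ← Real.sqrt_sq hy]
  rw [← Real.sqrt_div' _ (by positivity)]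
  congr 1
  field_simp
  ring

lemma rieszFun_monotoneOn : MonotoneOn rieszFun (Ici 0) := by
  intro a ha b hb hab
  rw [rieszFun_eq_sqrt ha, rieszFun_eq_sqrt hb]
  gcongr

lemma tendsto_rieszFun_atTop : Tendsto rieszFun atTop (𝓝 1) := by
  have hsq : Tendsto (fun y : ℝ => 1 + y ^ 2) atTop atTop :=
    tendsto_atTop_add_const_left _ _ (tendsto_pow_atTop two_ne_zero)
  have hlim : Tendsto (fun y : ℝ => √(1 - (1 + y ^ 2)⁻¹)) atTop (𝓝 1) := by
    simpa using ((tendsto_inv_atTop_zero.comp hsq).const_sub 1).sqrt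
  exact hlim.congr' (eventually_ge_atTop 0 |>.mono fun y hy => (rieszFun_eq_sqrt hy).symm)

lemma abs_rieszFun_sub_rieszFun_le_of_le {n x : ℝ} (hn : 0 ≤ n) (hx : n ≤ x) :
    |rieszFun x - rieszFun n| ≤ 1 - rieszFun n := by
  have hmono := rieszFun_monotoneOn hn (hn.trans hx) hx
  rw [abs_of_nonneg (sub_nonneg.2 hmono)]
  linarith [rieszFun_le_one x]

lemma abs_rieszFun_sub_rieszFun_clamp_le {n : ℝ} (hn : 0 ≤ n) (x : ℝ) :
    |rieszFun x - rieszFun (max (-n) (min n x))| ≤ 1 - rieszFun n := by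
  rcases le_or_gt x (-n) with hx | hx
  · rw [min_eq_right (by linarith), max_eq_left hx, rieszFun_neg, sub_neg_eq_add, ← abs_neg,
      neg_add', ← rieszFun_neg]
    exact abs_rieszFun_sub_rieszFun_le_of_le hn (le_neg.1 hx)
  rcases le_or_gt x n with hx' | hx'
  · rw [min_eq_right hx', max_eq_right hx.le, sub_self, abs_zero, sub_nonneg]
    exact rieszFun_le_one n
  · rw [min_eq_left hx'.le, max_eq_right (by linarith)]
    exact abs_rieszFun_sub_rieszFun_le_of_le hn hx'.le

namespace SAOp

variable {H : Type*} [NormedAddCommGroup H] [InnerProductSpace ℂ H] [CompleteSpace H]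

lemma norm_phi_sub_phi_le (T : SAOp H) {f g : ℝ → ℂ} {C : ℝ} (h : ∀ x, ‖f x - g x‖ ≤ C) :
    ‖T.phi f - T.phi g‖ ≤ C := by
  rw [← map_sub]
  exact T.norm_le _ C ((norm_nonneg _).trans (h 0)) h

end SAOp

/-- `𝔅^sa` is dense in `(𝒞^sa, d_R)`: for any self-adjoint `T`, the
bounded truncations `f_n(T)` (with `f_n(λ) = λ` for `|λ| ≤ n`, `f_n(λ) = n·sgn λ`
for `|λ| > n`) satisfy `‖F(T) - F(f_n(T))‖ ≤ |n/√(1+n²) - 1| → 0`. -/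
theorem statement16 {H : Type*} [NormedAddCommGroup H] [InnerProductSpace ℂ H]
    [CompleteSpace H] (T : SAOp H) :
    (∀ n : ℕ, ‖T.rieszF - T.phi (fun x =>
        ((max (-(n : ℝ)) (min (n : ℝ) x) : ℝ) : ℂ) /
          ((Real.sqrt (1 + (max (-(n : ℝ)) (min (n : ℝ) x)) ^ 2) : ℝ) : ℂ))‖
      ≤ |(n : ℝ) / Real.sqrt (1 + (n : ℝ) ^ 2) - 1|) ∧
    Tendsto (fun n : ℕ => ‖T.rieszF - T.phi (fun x =>
        ((max (-(n : ℝ)) (min (n : ℝ) x) : ℝ) : ℂ) /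
          ((Real.sqrt (1 + (max (-(n : ℝ)) (min (n : ℝ) x)) ^ 2) : ℝ) : ℂ))‖)
      atTop (𝓝 0) := by
  have bound : ∀ n : ℕ, ‖T.rieszF - T.phi (fun x =>
        ((max (-(n : ℝ)) (min (n : ℝ) x) : ℝ) : ℂ) /
          ((Real.sqrt (1 + (max (-(n : ℝ)) (min (n : ℝ) x)) ^ 2) : ℝ) : ℂ))‖
      ≤ |rieszFun n - 1| := fun n => by
    refine T.norm_phi_sub_phi_le fun x => ?_
    rw [← ofReal_div, ← ofReal_div, ← ofReal_sub, norm_real, Real.norm_eq_abs, abs_sub_comm _ 1,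
      abs_of_nonneg (sub_nonneg.2 (rieszFun_le_one n))]
    exact abs_rieszFun_sub_rieszFun_clamp_le n.cast_nonneg x
  have gap_tendsto : Tendsto (fun n : ℕ => |rieszFun n - 1|) atTop (𝓝 0) := by
    simpa using ((tendsto_rieszFun_atTop.comp tendsto_natCast_atTop_atTop).sub_const 1).abs
  exact ⟨bound, squeeze_zero (fun _ => norm_nonneg _) bound gap_tendsto⟩
end
end
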